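/- Let p > 0 and let Δ₁, Δ₂ ∈ ℤ[t, t⁻¹] be symmetric Laurent polynomials (Δᵢ(t⁻¹) = Δᵢ(t)) with Δ₁(1) = Δ₂(1) = 1. If (tᵖ - 1) divides Δ₁ - Δ₂, then (t - 1)(tᵖ - 1) divides Δ₁ - Δ₂ in ℤ[t, t⁻¹]. -/

import Mathlib

/-! Write `Δ₁ - Δ₂ = (tᵖ - 1) q`. Applying `t ↦ t⁻¹` to the symmetric `Δ₁ - Δ₂` gives
`(tᵖ - 1) q = (t⁻ᵖ - 1) q(t⁻¹) = (tᵖ - 1) (-t⁻ᵖ q(t⁻¹))`, so `q = -t⁻ᵖ q(t⁻¹)`. Evaluating at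
`t = 1` yields `q(1) = -q(1)`, hence `q(1) = 0` and `t - 1` divides `q`. -/

open LaurentPolynomial

/-- The value of a Laurent polynomial at `t = 1`, i.e. the sum of its coefficients. -/
def evalAtOne (f : ℤ[T;T⁻¹]) : ℤ := f.coeff.sum fun _ c => c

namespace LaurentPolynomial

section CommSemiring

variable {R S : Type*} [CommSemiring R] [CommSemiring S]

theorem eval₂_invert (f : R →+* S) (x : Sˣ) (g : R[T;T⁻¹]) :
    eval₂ f x (invert g) = eval₂ f x⁻¹ g := by
  induction g using LaurentPolynomial.induction_on' with
  | add g h hg hh => rw [map_add, map_add, map_add, hg, hh]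
  | C_mul_T n r => simp [inv_zpow']

end CommSemiring

section CommRing

variable {R : Type*} [CommRing R]

theorem T_sub_one_ne_zero [Nontrivial R] {n : ℤ} (hn : n ≠ 0) : (T n - 1 : R[T;T⁻¹]) ≠ 0 := by
  rw [sub_ne_zero, ← T_zero]
  exact fun h ↦ hn (AddMonoidAlgebra.single_left_injective one_ne_zero h)

theorem T_one_sub_one_dvd_iff {g : R[T;T⁻¹]} :
    (T 1 - 1 : R[T;T⁻¹]) ∣ g ↔ eval₂ (RingHom.id R) 1 g = 0 := by
  constructor
  · rintro ⟨q, rfl⟩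
    simp
  · intro hg
    obtain ⟨n, P, hP⟩ := g.exists_T_pow
    have hroot : P.IsRoot 1 := by
      have := congrArg (eval₂ (RingHom.id R) 1) hP
      rwa [eval₂_toLaurent, map_mul, hg, zero_mul, Polynomial.eval₂_id] at this
    have hdvd := map_dvd Polynomial.toLaurent (Polynomial.dvd_iff_isRoot.mpr hroot)
    rw [hP, map_sub, Polynomial.toLaurent_X, Polynomial.toLaurent_C, map_one] at hdvd
    exact (isUnit_T _).dvd_mul_right.mp hdvd

theorem mul_T_sub_one_dvd_of_invert_eq [IsDomain R] [CharZero R] {n : ℤ} {g : R[T;T⁻¹]}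
    (hsym : invert g = g) (hdvd : (T n - 1 : R[T;T⁻¹]) ∣ g) :
    (T 1 - 1 : R[T;T⁻¹]) * (T n - 1) ∣ g := by
  obtain ⟨q, rfl⟩ := hdvd
  rcases eq_or_ne n 0 with rfl | hn
  · simp
  have hq : q = -T (-n) * invert q := by
    refine mul_left_cancel₀ (T_sub_one_ne_zero hn) ?_
    conv_lhs => rw [← hsym]
    rw [map_mul, map_sub, invert_T, map_one]
    have hunit : (T n * T (-n) : R[T;T⁻¹]) = 1 := by rw [← T_add, add_neg_cancel, T_zero]
    linear_combination invert q * hunit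
  have hq_one : eval₂ (RingHom.id R) 1 q = 0 := by
    have := congrArg (eval₂ (RingHom.id R) 1) hq
    rw [map_mul, map_neg, eval₂_T, one_zpow, Units.val_one, neg_one_mul, eval₂_invert,
      inv_one] at this
    exact self_eq_neg.mp this
  rw [mul_comm (T 1 - 1)]
  exact mul_dvd_mul_left _ (T_one_sub_one_dvd_iff.mpr hq_one)

end CommRing

end LaurentPolynomial

theorem stmt5_general (p : ℕ) (Δ₁ Δ₂ : ℤ[T;T⁻¹])
    (hsym₁ : LaurentPolynomial.invert Δ₁ = Δ₁)
    (hsym₂ : LaurentPolynomial.invert Δ₂ = Δ₂)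
    (hdvd : (T (p : ℤ) - 1 : ℤ[T;T⁻¹]) ∣ Δ₁ - Δ₂) :
    (T 1 - 1 : ℤ[T;T⁻¹]) * (T (p : ℤ) - 1) ∣ Δ₁ - Δ₂ :=
  mul_T_sub_one_dvd_of_invert_eq (by rw [map_sub, hsym₁, hsym₂]) hdvd

/-- If `Δ₁, Δ₂ ∈ ℤ[t,t⁻¹]` are symmetric with `Δ₁(1) = Δ₂(1) = 1`
and `tᵖ - 1` divides `Δ₁ - Δ₂`, then `(t-1)(tᵖ-1)` divides `Δ₁ - Δ₂`. -/
theorem stmt5 (p : ℕ) (hp : 0 < p) (Δ₁ Δ₂ : ℤ[T;T⁻¹])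
    (hsym₁ : LaurentPolynomial.invert Δ₁ = Δ₁)
    (hsym₂ : LaurentPolynomial.invert Δ₂ = Δ₂)
    (h₁ : evalAtOne Δ₁ = 1) (h₂ : evalAtOne Δ₂ = 1)
    (hdvd : (T (p : ℤ) - 1 : ℤ[T;T⁻¹]) ∣ Δ₁ - Δ₂) :
    (T 1 - 1 : ℤ[T;T⁻¹]) * (T (p : ℤ) - 1) ∣ Δ₁ - Δ₂ :=
  stmt5_general p Δ₁ Δ₂ hsym₁ hsym₂ hdvd
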